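/- Let m, n be natural numbers, a ∈ ℝ^m, α ∈ ℝ^{m×n}, Σ₀ ∈ ℝ^{m×m} positive semidefinite, and let Σ^s ∈ ℝ^{(m+n)×(m+n)} be positive semidefinite with blocks Σ_{**} ∈ ℝ^{m×m}, Σ_{*t} ∈ ℝ^{m×n}, Σ_{t*} = Σ_{*t}ᵀ, Σ_{tt} ∈ ℝ^{n×n}. Let L ∈ ℝ^{(m+n)×(m+n)} be any matrix with L Lᵀ = Σ^s, with row blocks L_* ∈ ℝ^{m×(m+n)} (first m rows) and L_t ∈ ℝ^{n×(m+n)} (last n rows). Then (N(0, I_{m+n})).bind (fun ε => N(a + (L_* − α L_t) ε, Σ₀)) = N(a, Σ₀ + Σ^{boost}), where Σ^{boost} = Σ_{**} + α Σ_{tt} αᵀ − α Σ_{t*} − Σ_{*t} αᵀ. (Finite-dimensional core of Proposition 2: averaging the target posterior predictions over samples ε of the source posterior yields a Gaussian whose covariance is the target posterior covariance Σ₀ augmented by the boost term Σ^{boost}.) -/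

import Mathlib

open MeasureTheory ProbabilityTheory Matrix

open Classical in
/-- A measurable square root of a positive semidefinite real matrix
(junk value `0` if the matrix is not positive semidefinite). -/
noncomputable def matSqrt {ι : Type*} [Fintype ι] [DecidableEq ι]
    (S : Matrix ι ι ℝ) : Matrix ι ι ℝ :=
  if h : S.PosSemidef then
    (h.1.eigenvectorUnitary : Matrix ι ι ℝ) * diagonal ((↑) ∘ (√·) ∘ h.1.eigenvalues) *
      (star h.1.eigenvectorUnitary : Matrix ι ι ℝ)
  else 0

/-- The standard Gaussian measure `N(0, I)` on `ι → ℝ`. -/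
noncomputable def stdGaussian (ι : Type*) [Fintype ι] : Measure (ι → ℝ) :=
  Measure.pi fun _ => gaussianReal 0 1

/-- The multivariate Gaussian measure `N(μ, S)` on `ι → ℝ`, for `S` positive
semidefinite, realized as the pushforward of the standard Gaussian under the
affine map `x ↦ μ + √S x`. -/
noncomputable def multiGaussian {ι : Type*} [Fintype ι] [DecidableEq ι]
    (μ : ι → ℝ) (S : Matrix ι ι ℝ) : Measure (ι → ℝ) :=
  (stdGaussian ι).map fun x => μ + (matSqrt S).mulVec x

/-!
For a standard Gaussian vector `ε`, the law of `A ε` is `N(0, A Aᵀ)`: its characteristic function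
is `t ↦ exp (-tᵀ A Aᵀ t / 2)`. Sampling `ε` and then the target Gaussian amounts to taking the
law of `a + B ε + √Σ₀ η = a + [B | √Σ₀] (ε, η)` with `η` an independent standard Gaussian, where
`B = L_* - α L_t`. The Gram matrix of `[B | √Σ₀]` is `Σ₀ + B Bᵀ`, and reading `L Lᵀ = Σˢ` block
by block turns `B Bᵀ` into the boost covariance.
-/

open WithLp Complex

instance (ι : Type*) [Fintype ι] : IsProbabilityMeasure (stdGaussian ι) := by
  unfold _root_.stdGaussian; infer_instance

@[fun_prop]
lemma Matrix.measurable_mulVec {m n : Type*} [Fintype n] (A : Matrix m n ℝ) :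
    Measurable A.mulVec :=
  measurable_pi_lambda _ fun i => by simp only [mulVec, dotProduct]; fun_prop

lemma Measure.bind_map_eq_map_prod {α β γ : Type*} [MeasurableSpace α] [MeasurableSpace β]
    [MeasurableSpace γ] (μ : Measure α) (ν : Measure β) [SFinite ν]
    {g : α → β → γ} (hg : Measurable (Function.uncurry g)) :
    μ.bind (fun a => ν.map (g a)) = (μ.prod ν).map (Function.uncurry g) := by
  have hga (a : α) : Measurable (g a) := hg.comp measurable_prodMk_left
  have hkernel : Measurable fun a => ν.map (g a) := by
    refine Measure.measurable_of_measurable_coe _ fun s hs => ?_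
    simp_rw [Measure.map_apply (hga _) hs]
    exact measurable_measure_prodMk_left (hg hs)
  ext s hs
  rw [Measure.bind_apply hs hkernel.aemeasurable, Measure.map_apply hg hs,
    Measure.prod_apply (hg hs)]
  refine lintegral_congr fun a => ?_
  rw [Measure.map_apply (hga a) hs]
  rfl

lemma stdGaussian_eq_map_ofLp (ι : Type*) [Fintype ι] :
    stdGaussian ι = (ProbabilityTheory.stdGaussian (EuclideanSpace ℝ ι)).map ofLp := by
  rw [← map_pi_eq_stdGaussian, Measure.map_map (by fun_prop) (by fun_prop)]
  exact Measure.map_id.symm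

lemma charFun_stdGaussian_map_toLp_mulVec {ι κ : Type*} [Fintype ι] [Fintype κ]
    (A : Matrix κ ι ℝ) (t : EuclideanSpace ℝ κ) :
    charFun ((stdGaussian ι).map (toLp 2 ∘ A.mulVec)) t
      = cexp (-(ofLp t ⬝ᵥ (A * Aᵀ) *ᵥ ofLp t : ℝ) / 2) := by
  have hinner (x : EuclideanSpace ℝ ι) :
      inner ℝ (toLp 2 (A *ᵥ ofLp x)) t = inner ℝ x (toLp 2 (Aᵀ *ᵥ ofLp t)) := by
    simp only [EuclideanSpace.inner_eq_star_dotProduct, star_trivial]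
    rw [Matrix.dotProduct_mulVec, Matrix.mulVec_transpose]
  have hnorm : ‖toLp 2 (Aᵀ *ᵥ ofLp t)‖ ^ 2 = ofLp t ⬝ᵥ (A * Aᵀ) *ᵥ ofLp t := by
    rw [← real_inner_self_eq_norm_sq, EuclideanSpace.inner_eq_star_dotProduct, star_trivial,
      ← Matrix.mulVec_mulVec, Matrix.dotProduct_mulVec, ← Matrix.mulVec_transpose,
      Matrix.transpose_transpose, ofLp_toLp, dotProduct_comm]
  rw [stdGaussian_eq_map_ofLp, Measure.map_map (by fun_prop) (by fun_prop), charFun_apply,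
    integral_map (by fun_prop) (by fun_prop)]
  simp only [Function.comp_apply, hinner]
  rw [← charFun_apply, charFun_stdGaussian, ← ofReal_pow, hnorm]

lemma map_mulVec_stdGaussian {ι κ : Type*} [Fintype ι] [Fintype κ] [DecidableEq κ]
    (A : Matrix κ ι ℝ) :
    (stdGaussian ι).map A.mulVec = (multivariateGaussian 0 (A * Aᵀ)).map ofLp := by
  have hA : (A * Aᵀ).PosSemidef := by
    simpa using Matrix.posSemidef_self_mul_conjTranspose A
  have hlaw : (stdGaussian ι).map (toLp 2 ∘ A.mulVec) = multivariateGaussian 0 (A * Aᵀ) := by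
    refine Measure.ext_of_charFun (funext fun t => ?_)
    rw [charFun_stdGaussian_map_toLp_mulVec, charFun_multivariateGaussian hA]
    simp [neg_div]
  rw [← hlaw, Measure.map_map (by fun_prop) (by fun_prop)]
  rfl

lemma matSqrt_mul_transpose_self {ι : Type*} [Fintype ι] [DecidableEq ι]
    {S : Matrix ι ι ℝ} (hS : S.PosSemidef) : matSqrt S * (matSqrt S)ᵀ = S := by
  set U : Matrix ι ι ℝ := ↑hS.1.eigenvectorUnitary
  have hU : Uᵀ * U = 1 := by
    simpa [U, Matrix.star_eq_conjTranspose] using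
      Matrix.mem_unitaryGroup_iff'.1 hS.1.eigenvectorUnitary.2
  conv_rhs => rw [hS.1.spectral_theorem, Unitary.conjStarAlgAut_apply]
  rw [matSqrt, dif_pos hS]
  simp only [Matrix.star_eq_conjTranspose, conjTranspose_eq_transpose_of_trivial, transpose_mul,
    transpose_transpose, diagonal_transpose, Matrix.mul_assoc]
  rw [← Matrix.mul_assoc Uᵀ U, hU, Matrix.one_mul, ← Matrix.mul_assoc (diagonal _),
    diagonal_mul_diagonal]
  congr 3
  funext i
  simp [Real.mul_self_sqrt (hS.eigenvalues_nonneg i)]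

lemma mul_transpose_self_submatrix {m k p q R : Type*} [Fintype k] [CommSemiring R]
    (L : Matrix m k R) (r : p → m) (c : q → m) :
    (L * Lᵀ).submatrix r c = L.submatrix r id * (L.submatrix c id)ᵀ := by
  rw [transpose_submatrix, submatrix_mul L Lᵀ r id c Function.bijective_id]

lemma gram_submatrix_inl_sub_mul_submatrix_inr {m n k R : Type*} [Fintype n] [Fintype k]
    [CommRing R]
    (L : Matrix (m ⊕ n) k R) (α : Matrix m n R) {A : Matrix m m R} {B : Matrix m n R}
    {C : Matrix n m R} {D : Matrix n n R} (hL : L * Lᵀ = fromBlocks A B C D) :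
    (L.submatrix Sum.inl id - α * L.submatrix Sum.inr id) *
        (L.submatrix Sum.inl id - α * L.submatrix Sum.inr id)ᵀ
      = A + α * D * αᵀ - α * C - B * αᵀ := by
  set L₁ := L.submatrix Sum.inl id
  set L₂ := L.submatrix Sum.inr id
  have hA : L₁ * L₁ᵀ = A := by rw [← mul_transpose_self_submatrix, hL]; rfl
  have hB : L₁ * L₂ᵀ = B := by rw [← mul_transpose_self_submatrix, hL]; rfl
  have hC : L₂ * L₁ᵀ = C := by rw [← mul_transpose_self_submatrix, hL]; rfl
  have hD : L₂ * L₂ᵀ = D := by rw [← mul_transpose_self_submatrix, hL]; rfl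
  simp only [transpose_sub, transpose_mul, Matrix.sub_mul, Matrix.mul_sub, Matrix.mul_assoc]
  rw [← Matrix.mul_assoc L₁, ← Matrix.mul_assoc L₂ L₂ᵀ, hA, hB, hC, hD]
  abel

lemma map_fromCols_mulVec_stdGaussian {m ι κ : Type*} [Fintype ι] [Fintype κ]
    (B : Matrix m ι ℝ) (C : Matrix m κ ℝ) :
    (stdGaussian (ι ⊕ κ)).map (fromCols B C).mulVec
      = ((stdGaussian ι).prod (stdGaussian κ)).map fun p => B *ᵥ p.1 + C *ᵥ p.2 := by
  rw [_root_.stdGaussian,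
    ← (measurePreserving_sumPiEquivProdPi_symm fun _ => gaussianReal 0 1).map_eq,
    Measure.map_map (by fun_prop) (MeasurableEquiv.measurable _)]
  congr 1
  funext p
  exact fromCols_mulVec_sumElim B C p.1 p.2

lemma multiGaussian_eq_map_mulVec {ι κ : Type*} [Fintype ι] [Fintype κ] [DecidableEq κ]
    (μ : κ → ℝ) {S : Matrix κ κ ℝ} (hS : S.PosSemidef) (R : Matrix κ ι ℝ) (hR : R * Rᵀ = S) :
    multiGaussian μ S = ((stdGaussian ι).map R.mulVec).map (μ + ·) :=
  calc multiGaussian μ S = ((stdGaussian κ).map (matSqrt S).mulVec).map (μ + ·) := by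
        rw [Measure.map_map (by fun_prop) (by fun_prop)]
        rfl
    _ = ((stdGaussian ι).map R.mulVec).map (μ + ·) := by
        rw [map_mulVec_stdGaussian, map_mulVec_stdGaussian, matSqrt_mul_transpose_self hS, hR]

lemma bind_multiGaussian_add_mulVec {ι κ : Type*} [Fintype ι] [Fintype κ] [DecidableEq κ]
    (a : κ → ℝ) (B : Matrix κ ι ℝ) {S : Matrix κ κ ℝ} (hS : S.PosSemidef) :
    (stdGaussian ι).bind (fun ε => multiGaussian (a + B *ᵥ ε) S)
      = multiGaussian a (S + B * Bᵀ) := by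
  have hBB : (B * Bᵀ).PosSemidef := by simpa using Matrix.posSemidef_self_mul_conjTranspose B
  have hgram : fromCols B (matSqrt S) * (fromCols B (matSqrt S))ᵀ = S + B * Bᵀ := by
    rw [transpose_fromCols, fromCols_mul_fromRows, matSqrt_mul_transpose_self hS, add_comm]
  have hg : Measurable fun p : (ι → ℝ) × (κ → ℝ) => a + B *ᵥ p.1 + matSqrt S *ᵥ p.2 := by
    fun_prop
  rw [multiGaussian_eq_map_mulVec a (hS.add hBB) _ hgram, map_fromCols_mulVec_stdGaussian,
    Measure.map_map (by fun_prop) (by fun_prop)]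
  simp_rw [Function.comp_def, ← add_assoc]
  exact Measure.bind_map_eq_map_prod _ _ hg

theorem boosted_gp_bind_general (m n : ℕ) (a : Fin m → ℝ) (α : Matrix (Fin m) (Fin n) ℝ)
    (S0 : Matrix (Fin m) (Fin m) ℝ) (hS0 : S0.PosSemidef)
    (Sqq : Matrix (Fin m) (Fin m) ℝ) (Sqt : Matrix (Fin m) (Fin n) ℝ)
    (Stt : Matrix (Fin n) (Fin n) ℝ)
    (L : Matrix (Fin m ⊕ Fin n) (Fin m ⊕ Fin n) ℝ)
    (hL : L * Lᵀ = Matrix.fromBlocks Sqq Sqt Sqtᵀ Stt) :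
    (stdGaussian (Fin m ⊕ Fin n)).bind (fun ε =>
        multiGaussian
          (a + (L.submatrix Sum.inl id - α * L.submatrix Sum.inr id).mulVec ε) S0)
      = multiGaussian a (S0 + (Sqq + α * Stt * αᵀ - α * Sqtᵀ - Sqt * αᵀ)) := by
  rw [← gram_submatrix_inl_sub_mul_submatrix_inr L α hL]
  exact bind_multiGaussian_add_mulVec a _ hS0

/-- **Finite-dimensional core of Proposition 2.** Averaging the target posterior
predictions over samples `ε ~ N(0, I_{m+n})` of the source posterior
(with covariance `Σˢ = L Lᵀ`, block `*` = query points, block `t` = target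
training points) yields a Gaussian whose covariance is the target posterior
covariance `Σ₀` augmented by the boost term
`Σᵇ = Σ_{**} + α Σ_{tt} αᵀ - α Σ_{t*} - Σ_{*t} αᵀ`, where `Σ_{t*} = Σ_{*t}ᵀ` and
the row blocks of `L` are `L_* = L.submatrix Sum.inl id` (first `m` rows) and
`L_t = L.submatrix Sum.inr id` (last `n` rows). -/
theorem boosted_gp_bind (m n : ℕ) (a : Fin m → ℝ) (α : Matrix (Fin m) (Fin n) ℝ)
    (S0 : Matrix (Fin m) (Fin m) ℝ) (hS0 : S0.PosSemidef)
    (Sqq : Matrix (Fin m) (Fin m) ℝ) (Sqt : Matrix (Fin m) (Fin n) ℝ)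
    (Stt : Matrix (Fin n) (Fin n) ℝ)
    (hS : (Matrix.fromBlocks Sqq Sqt Sqtᵀ Stt).PosSemidef)
    (L : Matrix (Fin m ⊕ Fin n) (Fin m ⊕ Fin n) ℝ)
    (hL : L * Lᵀ = Matrix.fromBlocks Sqq Sqt Sqtᵀ Stt) :
    (stdGaussian (Fin m ⊕ Fin n)).bind (fun ε =>
        multiGaussian
          (a + (L.submatrix Sum.inl id - α * L.submatrix Sum.inr id).mulVec ε) S0)
      = multiGaussian a (S0 + (Sqq + α * Stt * αᵀ - α * Sqtᵀ - Sqt * αᵀ)) :=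
  boosted_gp_bind_general m n a α S0 hS0 Sqq Sqt Stt L hL
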